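/- For a uniformly random matching on [2n], the expected average number of socks on the floor, E[(1/(2n)) Σ_{k=1}^{2n} X_k], equals (2n+1)/6. -/

import Mathlib

open Finset
open scoped Classical

/-- An `r`-matching on `[r*n] = {1,...,r*n}`: a partition of `Finset.Icc 1 (r*n)`
into `r`-element blocks. -/
def IsRMatching (r n : ℕ) (M : Finset (Finset ℕ)) : Prop :=
  (∀ e ∈ M, e.card = r) ∧
  (∀ e ∈ M, ∀ f ∈ M, e ≠ f → Disjoint e f) ∧
  M.biUnion id = Finset.Icc 1 (r * n)

/-- The finite set of all `r`-matchings on `[r*n]`. -/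
noncomputable def matchings (r n : ℕ) : Finset (Finset (Finset ℕ)) :=
  ((Finset.Icc 1 (r * n)).powerset.powerset).filter (IsRMatching r n)

/-- `x_k(M) = Σ_{e ∈ M_k} |e ∩ [k]|`, summed over blocks `e` meeting both `[k]`
and its complement. -/
noncomputable def sockAt (k : ℕ) (M : Finset (Finset ℕ)) : ℕ :=
  ∑ e ∈ M.filter
      (fun e => (e ∩ Finset.Icc 1 k).Nonempty ∧ (e \ Finset.Icc 1 k).Nonempty),
    (e ∩ Finset.Icc 1 k).card

/-- For `r = 2`: the number of edges with one endpoint in `[k]` and one outside. -/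
noncomputable def crossAt (k : ℕ) (M : Finset (Finset ℕ)) : ℕ :=
  (M.filter
      (fun e => (e ∩ Finset.Icc 1 k).Nonempty ∧ (e \ Finset.Icc 1 k).Nonempty)).card

/-- The sock number of a matching on `[2n]`: `max_{1 ≤ k ≤ 2n} x_k(M)`. -/
noncomputable def sockNum (n : ℕ) (M : Finset (Finset ℕ)) : ℕ :=
  (Finset.Icc 1 (2 * n)).sup (fun k => crossAt k M)

/-!
Every pair `{i, j}` of distinct points of `[2n]` lies in the same number `t` of matchings, since a
transposition of `[2n]` permutes the matchings. Double counting the ordered pairs that lie in a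
common block of a matching gives `2n (2n - 1) t = 2n N`, where `N` is the number of matchings.
Exchanging the sums over matchings and over `k`, the total of `X_k` is
`∑ₖ k (2n - k) t = n (2n - 1) (2n + 1) t / 3`, and dividing by `2n N` leaves `(2n + 1) / 6`.
-/

open Equiv (swap)

lemma sum_Icc_mul_sub (c : ℚ) (m : ℕ) :
    ∑ k ∈ Icc 1 m, (k : ℚ) * (c - k) =
      c * m * (m + 1) / 2 - m * (m + 1) * (2 * m + 1) / 6 := by
  induction m with
  | zero => simp
  | succ m ih => rw [sum_Icc_succ_top (by omega), ih]; push_cast; ring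

lemma Finset.pair_eq_of_card_eq_two {α : Type*} [DecidableEq α] {e : Finset α}
    (he : #e = 2) {a b : α} (ha : a ∈ e) (hb : b ∈ e) (hab : a ≠ b) : {a, b} = e :=
  eq_of_subset_of_card_le (insert_subset ha (singleton_subset_iff.2 hb))
    (by rw [he, card_pair hab])

lemma Finset.image_swap_eq_self {α : Type*} [DecidableEq α] {s : Finset α} {a b : α}
    (ha : a ∈ s) (hb : b ∈ s) : s.image (swap a b) = s := by
  have hmem : ∀ x ∈ s, swap a b x ∈ s := fun x hx => by
    rw [Equiv.swap_apply_def]; split_ifs <;> assumption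
  refine Subset.antisymm (fun y hy => ?_) fun x hx =>
    mem_image.2 ⟨_, hmem x hx, Equiv.swap_apply_self ..⟩
  obtain ⟨x, hx, rfl⟩ := mem_image.1 hy
  exact hmem x hx

namespace IsRMatching

variable {r n : ℕ} {M : Finset (Finset ℕ)}

lemma subset_Icc (h : IsRMatching r n M) {e : Finset ℕ} (he : e ∈ M) : e ⊆ Icc 1 (r * n) :=
  h.2.2 ▸ subset_biUnion_of_mem id he

lemma image_perm (h : IsRMatching r n M) (σ : Equiv.Perm ℕ)
    (hσ : (Icc 1 (r * n)).image σ = Icc 1 (r * n)) :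
    IsRMatching r n (M.image (·.image σ)) := by
  obtain ⟨hcard, hdisj, hcover⟩ := h
  refine ⟨?_, ?_, ?_⟩
  · simp only [mem_image, forall_exists_index, and_imp, forall_apply_eq_imp_iff₂]
    intro e he
    rw [card_image_of_injective _ σ.injective, hcard e he]
  · simp only [mem_image, forall_exists_index, and_imp, forall_apply_eq_imp_iff₂]
    intro e he f hf hne
    exact (disjoint_image σ.injective).2 (hdisj e he f hf (by rintro rfl; exact hne rfl))
  · rw [← hσ, ← hcover, biUnion_image, image_biUnion]
    rfl

lemma pair_mem_iff (h : IsRMatching 2 n M) {a b : ℕ} (hab : a ≠ b) :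
    {a, b} ∈ M ↔ ∃ e ∈ M, a ∈ e ∧ b ∈ e := by
  refine ⟨fun hm => ⟨_, hm, by simp, by simp⟩, ?_⟩
  rintro ⟨e, he, ha, hb⟩
  rwa [pair_eq_of_card_eq_two (h.1 e he) ha hb hab]

lemma card_filter_offDiag_pair_mem (h : IsRMatching 2 n M) :
    #{p ∈ (Icc 1 (2 * n)).offDiag | {p.1, p.2} ∈ M} = 2 * n := by
  have hblocks : {p ∈ (Icc 1 (2 * n)).offDiag | {p.1, p.2} ∈ M} = M.biUnion offDiag := by
    ext ⟨a, b⟩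
    simp only [mem_filter, mem_offDiag, mem_biUnion]
    constructor
    · rintro ⟨⟨-, -, hab⟩, hm⟩
      obtain ⟨e, he, ha, hb⟩ := (h.pair_mem_iff hab).1 hm
      exact ⟨e, he, ha, hb, hab⟩
    · rintro ⟨e, he, ha, hb, hab⟩
      exact ⟨⟨h.subset_Icc he ha, h.subset_Icc he hb, hab⟩,
        (h.pair_mem_iff hab).2 ⟨e, he, ha, hb⟩⟩
  have hdisj : (M : Set (Finset ℕ)).PairwiseDisjoint offDiag := fun e he f hf hne =>
    disjoint_left.2 fun p hpe hpf =>
      disjoint_left.1 (h.2.1 e he f hf hne) (mem_offDiag.1 hpe).1 (mem_offDiag.1 hpf).1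
  calc #{p ∈ (Icc 1 (2 * n)).offDiag | {p.1, p.2} ∈ M}
      = ∑ e ∈ M, #e := by
        rw [hblocks, card_biUnion hdisj]
        exact sum_congr rfl fun e he => by rw [offDiag_card, h.1 e he]
    _ = #(M.biUnion id) := (card_biUnion h.2.1).symm
    _ = 2 * n := by rw [h.2.2, Nat.card_Icc, Nat.add_sub_cancel]

lemma crossAt_eq (h : IsRMatching 2 n M) (k : ℕ) :
    crossAt k M = #{p ∈ Icc 1 k ×ˢ Icc (k + 1) (2 * n) | {p.1, p.2} ∈ M} := by
  symm
  refine card_bij (fun p _ => {p.1, p.2}) ?_ ?_ ?_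
  · rintro ⟨a, b⟩ hp
    simp only [mem_filter, mem_product, mem_Icc] at hp
    refine mem_filter.2 ⟨hp.2, ⟨a, ?_⟩, ⟨b, ?_⟩⟩ <;>
      simp only [mem_inter, mem_sdiff, mem_insert, mem_singleton, true_or, or_true, mem_Icc,
        not_and, not_le, true_and] <;> omega
  · rintro ⟨a, b⟩ hp ⟨a', b'⟩ hp' heq
    simp only [mem_filter, mem_product, mem_Icc] at hp hp'
    have ha' : a' ∈ ({a, b} : Finset ℕ) := heq ▸ by simp
    have hb' : b' ∈ ({a, b} : Finset ℕ) := heq ▸ by simp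
    simp only [mem_insert, mem_singleton] at ha' hb'
    simp only [Prod.mk.injEq]
    omega
  · intro e he
    obtain ⟨hm, ⟨a, ha⟩, ⟨b, hb⟩⟩ := mem_filter.1 he
    simp only [mem_inter, mem_sdiff] at ha hb
    have hab : a ≠ b := by rintro rfl; exact hb.2 ha.2
    have hb' := mem_Icc.1 (h.subset_Icc hm hb.1)
    simp only [mem_Icc] at ha hb
    have hpair := pair_eq_of_card_eq_two (h.1 e hm) ha.1 hb.1 hab
    refine ⟨(a, b), mem_filter.2 ⟨?_, hpair ▸ hm⟩, hpair⟩
    simp only [mem_product, mem_Icc]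
    omega

end IsRMatching

lemma mem_matchings {r n : ℕ} {M : Finset (Finset ℕ)} :
    M ∈ matchings r n ↔ IsRMatching r n M := by
  simp only [matchings, mem_filter, mem_powerset, and_iff_right_iff_imp]
  exact fun h e he => mem_powerset.2 (h.subset_Icc he)

lemma matchings_nonempty (n : ℕ) : (matchings 2 n).Nonempty := by
  refine ⟨(range n).image (fun i => ({2 * i + 1, 2 * i + 2} : Finset ℕ)),
    mem_matchings.2 ⟨?_, ?_, ?_⟩⟩
  · simp only [mem_image, forall_exists_index, and_imp, forall_apply_eq_imp_iff₂]
    exact fun i _ => card_pair (by omega)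
  · simp only [mem_image, forall_exists_index, and_imp, forall_apply_eq_imp_iff₂]
    intro i _ j _ hne
    have : i ≠ j := by rintro rfl; exact hne rfl
    simp only [disjoint_left, mem_insert, mem_singleton]
    omega
  · ext x
    simp only [mem_biUnion, mem_image, mem_range, mem_Icc, id, exists_exists_and_eq_and,
      mem_insert, mem_singleton]
    constructor
    · rintro ⟨i, hi, hx⟩; omega
    · intro hx; exact ⟨(x - 1) / 2, by omega, by omega⟩

section Symmetry

variable {r n : ℕ}

lemma card_filter_matchings_image_swap {a b : ℕ} (ha : a ∈ Icc 1 (r * n))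
    (hb : b ∈ Icc 1 (r * n)) (e : Finset ℕ) :
    #{M ∈ matchings r n | e.image (swap a b) ∈ M} = #{M ∈ matchings r n | e ∈ M} := by
  have hS := image_swap_eq_self ha hb
  have hinv : ∀ f : Finset ℕ, (f.image (swap a b)).image (swap a b) = f := fun f => by
    simp [image_image, Function.comp_def]
  refine card_nbij' (·.image (·.image (swap a b))) (·.image (·.image (swap a b))) ?_ ?_ ?_ ?_
  · intro M hM
    simp only [coe_filter, Set.mem_ofPred_eq, mem_matchings] at hM ⊢
    exact ⟨hM.1.image_perm _ hS,
      by simpa [hinv] using mem_image_of_mem (·.image (swap a b)) hM.2⟩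
  · intro M hM
    simp only [coe_filter, Set.mem_ofPred_eq, mem_matchings] at hM ⊢
    exact ⟨hM.1.image_perm _ hS, mem_image_of_mem _ hM.2⟩
  all_goals intro M _; simp [image_image, Function.comp_def, hinv]

lemma card_filter_matchings_pair_eq {i j i' j' : ℕ} (hij : (i, j) ∈ (Icc 1 (r * n)).offDiag)
    (hij' : (i', j') ∈ (Icc 1 (r * n)).offDiag) :
    #{M ∈ matchings r n | {i, j} ∈ M} = #{M ∈ matchings r n | {i', j'} ∈ M} := by
  obtain ⟨hi, hj, hne⟩ : i ∈ Icc 1 (r * n) ∧ j ∈ Icc 1 (r * n) ∧ i ≠ j :=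
    mem_offDiag.1 hij
  obtain ⟨hi', hj', hne'⟩ : i' ∈ Icc 1 (r * n) ∧ j' ∈ Icc 1 (r * n) ∧ i' ≠ j' :=
    mem_offDiag.1 hij'
  -- `swap i i'` sends `i` to `i'`; `swap j₁ j'` then fixes `i'` and sends `j₁` to `j'`.
  set j₁ := swap i i' j
  have hj₁ : j₁ ∈ Icc 1 (r * n) := by
    rw [← image_swap_eq_self hi hi']; exact mem_image_of_mem _ hj
  have hj₁i' : j₁ ≠ i' := by
    rw [Ne, Equiv.swap_apply_eq_iff, Equiv.swap_apply_right]; exact hne.symm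
  calc #{M ∈ matchings r n | {i, j} ∈ M}
      = #{M ∈ matchings r n |
          (({i, j} : Finset ℕ).image (swap i i')).image (swap j₁ j') ∈ M} := by
        rw [card_filter_matchings_image_swap hj₁ hj', card_filter_matchings_image_swap hi hi']
    _ = #{M ∈ matchings r n | {i', j'} ∈ M} := by
        simp [Equiv.swap_apply_of_ne_of_ne hj₁i'.symm hne', j₁]

lemma sum_card_filter_pair_mem {A : Finset (ℕ × ℕ)} (hA : A ⊆ (Icc 1 (r * n)).offDiag)
    {i j : ℕ} (hij : (i, j) ∈ (Icc 1 (r * n)).offDiag) :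
    ∑ M ∈ matchings r n, #{p ∈ A | {p.1, p.2} ∈ M} =
      #A * #{M ∈ matchings r n | {i, j} ∈ M} := by
  have hcomm := sum_card_bipartiteAbove_eq_sum_card_bipartiteBelow (s := matchings r n) (t := A)
    (r := fun M p => {p.1, p.2} ∈ M)
  simp only [bipartiteAbove, bipartiteBelow] at hcomm
  rw [hcomm, sum_congr rfl fun p hp => card_filter_matchings_pair_eq (hA hp) hij, sum_const,
    smul_eq_mul]

end Symmetry

section Counting

variable {n : ℕ}

lemma one_two_mem_offDiag (hn : 1 ≤ n) : ((1, 2) : ℕ × ℕ) ∈ (Icc 1 (2 * n)).offDiag := by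
  simp only [mem_offDiag, mem_Icc]; omega

lemma card_matchings_eq (hn : 1 ≤ n) :
    #(matchings 2 n) = (2 * n - 1) * #{M ∈ matchings 2 n | {1, 2} ∈ M} := by
  have hcount := sum_card_filter_pair_mem (subset_refl _) (one_two_mem_offDiag hn)
  rw [sum_congr rfl fun M hM => (mem_matchings.1 hM).card_filter_offDiag_pair_mem, sum_const,
    smul_eq_mul, offDiag_card, Nat.card_Icc, Nat.add_sub_cancel, ← Nat.sub_one_mul,
    mul_right_comm] at hcount
  exact Nat.eq_of_mul_eq_mul_right (by omega) hcount

lemma sum_crossAt (hn : 1 ≤ n) (k : ℕ) :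
    ∑ M ∈ matchings 2 n, crossAt k M =
      k * (2 * n - k) * #{M ∈ matchings 2 n | {1, 2} ∈ M} := by
  have hbox : Icc 1 k ×ˢ Icc (k + 1) (2 * n) ⊆ (Icc 1 (2 * n)).offDiag := fun p hp => by
    simp only [mem_product, mem_Icc] at hp
    simp only [mem_offDiag, mem_Icc]
    omega
  rw [sum_congr rfl fun M hM => (mem_matchings.1 hM).crossAt_eq k,
    sum_card_filter_pair_mem hbox (one_two_mem_offDiag hn), card_product, Nat.card_Icc,
    Nat.card_Icc, Nat.add_sub_cancel, Nat.add_sub_add_right]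

end Counting

theorem stmt10 (n : ℕ) (hn : 1 ≤ n) :
    (∑ M ∈ matchings 2 n,
        (∑ k ∈ Finset.Icc 1 (2 * n), (crossAt k M : ℚ)) / (2 * n)) /
        (matchings 2 n).card =
      (2 * n + 1) / 6 := by
  set t := #{M ∈ matchings 2 n | {1, 2} ∈ M}
  have hN : (#(matchings 2 n) : ℚ) = (2 * n - 1) * t := by
    rw [card_matchings_eq hn]; push_cast [Nat.cast_sub (by omega : 1 ≤ 2 * n)]; ring
  have ht : (t : ℚ) ≠ 0 := by
    intro h
    rw [h, mul_zero, Nat.cast_eq_zero, card_eq_zero] at hN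
    exact (matchings_nonempty n).ne_empty hN
  have h2n : (2 * n - 1 : ℚ) ≠ 0 := by
    have : (1 : ℚ) ≤ n := by exact_mod_cast hn
    linarith
  have htotal : ∑ M ∈ matchings 2 n, ∑ k ∈ Icc 1 (2 * n), (crossAt k M : ℚ) =
      n * (2 * n + 1) * (2 * n - 1) / 3 * t := by
    rw [sum_comm]
    calc _ = ∑ k ∈ Icc 1 (2 * n), (k : ℚ) * (2 * n - k) * t := sum_congr rfl fun k hk => by
            rw [← Nat.cast_sum, sum_crossAt hn]
            push_cast [Nat.cast_sub (mem_Icc.1 hk).2]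
            ring
      _ = _ := by rw [← sum_mul, sum_Icc_mul_sub]; push_cast; ring
  rw [← sum_div, htotal, hN, div_div,
    div_eq_div_iff (mul_ne_zero (by positivity) (mul_ne_zero h2n ht)) (by norm_num)]
  ring
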